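/- For integers a ≥ 3 and m with 1 < m < a, the coin system (1, a, 2a-1, m(2a-1)-(a-1), m(2a-1), (2m-1)(2a-1)) is orderly. -/

import Mathlib

/-- The largest coin value in `C` that is at most `v` (or 0 if none). -/
def coinMax (C : List ℕ) (v : ℕ) : ℕ := (C.filter (· ≤ v)).foldr max 0

/-- Fuelled greedy coin count. -/
def grdAux (C : List ℕ) : ℕ → ℕ → ℕ
  | 0, _ => 0
  | fuel + 1, v =>
    let c := coinMax C v
    if v = 0 ∨ c = 0 then 0 else 1 + grdAux C fuel (v - c)

/-- Number of coins used by the greedy algorithm to represent `v` with coin system `C`. -/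
def grd (C : List ℕ) (v : ℕ) : ℕ := grdAux C v v

/-- The set of sizes of representations of `v` as nonnegative integer combinations of
the coin values in `C`. -/
def reprCosts (C : List ℕ) (v : ℕ) : Set ℕ :=
  {k | ∃ x : List ℕ, x.length = C.length ∧ (List.zipWith (· * ·) x C).sum = v ∧ x.sum = k}

/-- Minimum number of coins needed to represent `v` with coin system `C`. -/
noncomputable def opt (C : List ℕ) (v : ℕ) : ℕ := sInf (reprCosts C v)

/-- A coin system is orderly if greedy is optimal for every positive value. -/
def Orderly (C : List ℕ) : Prop := ∀ v : ℕ, 0 < v → grd C v = opt C v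

/-!
Greedy is optimal as soon as it has the exchange property: for every value `v` and every
representation of `v`, the value `v - g`, with `g` the greedy coin for `v`, has a representation
with one coin fewer. Strong induction on `v` then bounds the greedy count by the size of every
representation.

Write `b = 2a - 1`, so the coins are `1, a, b, c₄ = (m - 1)b + a, c₅ = mb, c₆ = (2m - 1)b`.
Within the small coins `1, a, b`, taking a coin `b` out of any representation of a value `≥ b`
leaves a representation with one coin fewer, since `2a = b + 1`; taking out `a - 1` costs no
extra coin.
Among the large coins the identities `2c₄ = c₆ + 1`, `c₄ + c₅ = c₆ + a`, `2c₅ = c₆ + b` and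
`c₅ = c₄ + (a - 1)` make the exchanges; whatever the large coins of a representation cannot pay
is paid by taking copies of `b` out of its small coins.
-/

section CoinSystem

variable {C D : List ℕ} {c v k : ℕ}

theorem mem_reprCosts_nil : k ∈ reprCosts [] v ↔ v = 0 ∧ k = 0 := by
  simp [reprCosts, eq_comm]

theorem mem_reprCosts_singleton : k ∈ reprCosts [c] v ↔ k * c = v := by
  constructor
  · rintro ⟨_ | ⟨n, _ | _⟩, hlen, hsum, rfl⟩ <;> simp_all
  · rintro rfl
    exact ⟨[k], rfl, by simp, by simp⟩

theorem mem_reprCosts_append : k ∈ reprCosts (C ++ D) v ↔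
    ∃ v₁ v₂ k₁ k₂, k₁ ∈ reprCosts C v₁ ∧ k₂ ∈ reprCosts D v₂ ∧ v₁ + v₂ = v ∧ k₁ + k₂ = k := by
  constructor
  · rintro ⟨x, hlen, rfl, rfl⟩
    rw [List.length_append] at hlen
    have hx : x = x.take C.length ++ x.drop C.length := (List.take_append_drop _ _).symm
    refine ⟨_, _, _, _, ⟨x.take C.length, by rw [List.length_take]; omega, rfl, rfl⟩,
      ⟨x.drop C.length, by rw [List.length_drop]; omega, rfl, rfl⟩, ?_, ?_⟩
    · rw [← List.sum_append, ← List.zipWith_append (by rw [List.length_take]; omega), ← hx]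
    · rw [← List.sum_append, ← hx]
  · rintro ⟨v₁, v₂, k₁, k₂, ⟨x, hx, rfl, rfl⟩, ⟨y, hy, rfl, rfl⟩, rfl, rfl⟩
    exact ⟨x ++ y, by simp [hx, hy], by simp [List.zipWith_append hx], by simp⟩

theorem mem_reprCosts_cons : k ∈ reprCosts (c :: C) v ↔
    ∃ n w j, j ∈ reprCosts C w ∧ n * c + w = v ∧ n + j = k := by
  rw [← List.singleton_append, mem_reprCosts_append]
  simp only [mem_reprCosts_singleton]
  constructor
  · rintro ⟨_, w, n, j, rfl, hj, rfl, rfl⟩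
    exact ⟨n, w, j, hj, rfl, rfl⟩
  · rintro ⟨n, w, j, hj, rfl, rfl⟩
    exact ⟨_, w, n, j, rfl, hj, rfl, rfl⟩

theorem zero_mem_reprCosts : 0 ∈ reprCosts C 0 := by
  induction C with
  | nil => exact mem_reprCosts_nil.2 ⟨rfl, rfl⟩
  | cons c C ih => exact mem_reprCosts_cons.2 ⟨0, 0, 0, ih, by simp, rfl⟩

theorem add_mem_reprCosts (hc : c ∈ C) (hk : k ∈ reprCosts C v) :
    k + 1 ∈ reprCosts C (v + c) := by
  induction C generalizing v k with
  | nil => simp at hc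
  | cons d C ih =>
    obtain ⟨n, w, j, hj, rfl, rfl⟩ := mem_reprCosts_cons.1 hk
    rcases List.mem_cons.1 hc with rfl | hc
    · exact mem_reprCosts_cons.2 ⟨n + 1, w, j, hj, by ring, by ring⟩
    · exact mem_reprCosts_cons.2 ⟨n, w + c, j + 1, ih hc hj, by ring, by ring⟩

theorem pos_of_mem_reprCosts (hk : k ∈ reprCosts C v) (hv : 0 < v) : 0 < k := by
  induction C generalizing v k with
  | nil => simp_all [mem_reprCosts_nil]
  | cons d C ih =>
    obtain ⟨n, w, j, hj, rfl, rfl⟩ := mem_reprCosts_cons.1 hk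
    rcases Nat.eq_zero_or_pos n with rfl | hn
    · simpa using ih hj (by simpa using hv)
    · omega

def Payable (C : List ℕ) (v k : ℕ) : Prop := ∃ j ∈ reprCosts C v, j ≤ k

theorem payable_of_mem (hk : k ∈ reprCosts C v) : Payable C v k := ⟨k, hk, le_rfl⟩

theorem Payable.of_eq_of_le {v' k' : ℕ} (h : Payable C v k) (hv : v = v') (hk : k ≤ k') :
    Payable C v' k' := by
  obtain ⟨j, hj, hjk⟩ := h
  exact ⟨j, hv ▸ hj, hjk.trans hk⟩

theorem Payable.add_coin (hc : c ∈ C) (h : Payable C v k) : Payable C (v + c) (k + 1) := by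
  obtain ⟨j, hj, hjk⟩ := h
  exact ⟨j + 1, add_mem_reprCosts hc hj, by omega⟩

theorem payable_append_triple_iff {d₁ d₂ d₃ : ℕ} : Payable (C ++ [d₁, d₂, d₃]) v k ↔
    ∃ w j n₁ n₂ n₃, Payable C w j ∧ w + n₁ * d₁ + n₂ * d₂ + n₃ * d₃ = v ∧
      j + n₁ + n₂ + n₃ ≤ k := by
  simp only [Payable, mem_reprCosts_append, mem_reprCosts_cons, mem_reprCosts_nil]
  constructor
  · rintro ⟨_, ⟨w, _, j, _, hj, ⟨n₁, _, _, ⟨n₂, _, _, ⟨n₃, _, _, ⟨rfl, rfl⟩, rfl, rfl⟩, rfl, rfl⟩,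
      rfl, rfl⟩, rfl, rfl⟩, hk⟩
    exact ⟨w, j, n₁, n₂, n₃, ⟨j, hj, le_rfl⟩, by ring, by omega⟩
  · rintro ⟨w, j, n₁, n₂, n₃, ⟨i, hi, hij⟩, rfl, hk⟩
    exact ⟨_, ⟨w, _, i, _, hi, ⟨n₁, _, _, ⟨n₂, _, _, ⟨n₃, 0, 0, ⟨rfl, rfl⟩, rfl, rfl⟩, rfl, rfl⟩,
      rfl, rfl⟩, by ring, rfl⟩, by omega⟩

theorem coinMax_cons :
    coinMax (c :: C) v = if c ≤ v then max c (coinMax C v) else coinMax C v := by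
  unfold coinMax
  split_ifs with h <;> simp [h]

theorem coinMax_le : coinMax C v ≤ v := by
  induction C with
  | nil => simp [coinMax]
  | cons c C ih => rw [coinMax_cons]; split_ifs <;> omega

theorem coinMax_mem (h : 0 < coinMax C v) : coinMax C v ∈ C := by
  induction C with
  | nil => simp [coinMax] at h
  | cons c C ih =>
    rw [coinMax_cons] at h ⊢
    split_ifs at h ⊢ <;> grind

theorem le_coinMax (hc : c ∈ C) (hcv : c ≤ v) : c ≤ coinMax C v := by
  induction C with
  | nil => simp at hc
  | cons d C ih =>
    rw [coinMax_cons]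
    rcases List.mem_cons.1 hc with rfl | hc
    · simp [hcv]
    · have := ih hc
      split_ifs <;> omega

theorem coinMax_eq (hc : c ∈ C) (hcv : c ≤ v) (hmax : ∀ d ∈ C, c < d → v < d) :
    coinMax C v = c := by
  refine le_antisymm ?_ (le_coinMax hc hcv)
  by_contra! hlt
  have hmem := coinMax_mem (hlt.trans_le' (Nat.zero_le c))
  exact absurd (hmax _ hmem hlt) (not_lt.2 coinMax_le)

theorem grdAux_succ_of_le {f : ℕ} (hv : v ≤ f) : grdAux C (f + 1) v = grdAux C f v := by
  induction f generalizing v with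
  | zero =>
    obtain rfl : v = 0 := by omega
    simp [grdAux]
  | succ f ih =>
    rw [grdAux.eq_2 C v (f + 1), grdAux.eq_2 C v f]
    split_ifs with h
    · rfl
    · rw [ih (by omega)]

theorem grdAux_of_le {f : ℕ} (hv : v ≤ f) : grdAux C f v = grd C v := by
  induction f, hv using Nat.le_induction with
  | base => rfl
  | succ f hf ih => rw [grdAux_succ_of_le hf, ih]

theorem grd_eq : grd C v =
    if v = 0 ∨ coinMax C v = 0 then 0 else 1 + grd C (v - coinMax C v) := by
  rcases v with _ | v
  · simp [grd, grdAux]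
  · rw [grd, grdAux.eq_2]
    by_cases h : coinMax C (v + 1) = 0
    · simp [h]
    · simp [h, grdAux_of_le (show v + 1 - coinMax C (v + 1) ≤ v by omega)]

theorem grd_mem_reprCosts (h1 : 1 ∈ C) : grd C v ∈ reprCosts C v := by
  induction v using Nat.strong_induction_on with
  | _ v ih =>
    rw [grd_eq]
    split_ifs with h
    · obtain rfl : v = 0 := by
        have := le_coinMax (v := v) h1
        omega
      exact zero_mem_reprCosts
    · push Not at h
      have hg := coinMax_le (C := C) (v := v)
      have := add_mem_reprCosts (coinMax_mem (Nat.pos_of_ne_zero h.2))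
        (ih (v - coinMax C v) (by omega))
      rwa [Nat.sub_add_cancel hg, add_comm] at this

def GreedyExchange (C : List ℕ) : Prop :=
  ∀ v k, 0 < v → k ∈ reprCosts C v → Payable C (v - coinMax C v) (k - 1)

theorem GreedyExchange.grd_le (hC : GreedyExchange C) (hk : k ∈ reprCosts C v) :
    grd C v ≤ k := by
  induction v using Nat.strong_induction_on generalizing k with
  | _ v ih =>
    rw [grd_eq]
    split_ifs with h
    · exact Nat.zero_le k
    · push Not at h
      have hv := Nat.pos_of_ne_zero h.1
      obtain ⟨j, hj, hjk⟩ := hC v k hv hk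
      have := ih _ (by have := Nat.pos_of_ne_zero h.2; omega) hj
      have := pos_of_mem_reprCosts hk hv
      omega

theorem GreedyExchange.orderly (h1 : 1 ∈ C) (hC : GreedyExchange C) : Orderly C :=
  fun _ _ => le_antisymm (le_csInf ⟨_, grd_mem_reprCosts h1⟩ fun _ => hC.grd_le)
    (Nat.sInf_le (grd_mem_reprCosts h1))

end CoinSystem

section Family

variable {a m L ℓ v x₄ x₅ x₆ : ℕ}

def lowCoins (a : ℕ) : List ℕ := [1, a, 2 * a - 1]

theorem payable_lowCoins_iff : Payable (lowCoins a) L ℓ ↔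
    ∃ y₁ y₂ y₃, y₁ + y₂ * a + y₃ * (2 * a - 1) = L ∧ y₁ + y₂ + y₃ ≤ ℓ := by
  rw [lowCoins, ← List.nil_append [1, a, 2 * a - 1], payable_append_triple_iff]
  constructor
  · rintro ⟨w, j, y₁, y₂, y₃, ⟨i, hi, -⟩, rfl, hk⟩
    obtain ⟨rfl, rfl⟩ := mem_reprCosts_nil.1 hi
    exact ⟨y₁, y₂, y₃, by ring, by omega⟩
  · rintro ⟨y₁, y₂, y₃, rfl, hk⟩
    exact ⟨0, 0, y₁, y₂, y₃, payable_of_mem zero_mem_reprCosts, by ring, by omega⟩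

theorem Payable.lowCoins_sub_one (h : Payable (lowCoins a) L ℓ) (hL : 0 < L) (hLa : L < a) :
    Payable (lowCoins a) (L - 1) (ℓ - 1) := by
  obtain ⟨y₁, _ | y₂, _ | y₃, rfl, hk⟩ := payable_lowCoins_iff.1 h <;>
    simp only [add_mul, one_mul, zero_mul, add_zero] at hL hLa ⊢
  · exact payable_lowCoins_iff.2 ⟨y₁ - 1, 0, 0, by omega, by omega⟩
  all_goals omega

theorem Payable.lowCoins_sub_a (h : Payable (lowCoins a) L ℓ) (haL : a ≤ L)
    (hLb : L < 2 * a - 1) : Payable (lowCoins a) (L - a) (ℓ - 1) := by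
  obtain ⟨y₁, _ | y₂, _ | y₃, rfl, hk⟩ := payable_lowCoins_iff.1 h <;>
    simp only [add_mul, one_mul, zero_mul, add_zero] at haL hLb ⊢
  · exact payable_lowCoins_iff.2 ⟨y₁ - a, 0, 0, by omega, by omega⟩
  · omega
  · exact payable_lowCoins_iff.2 ⟨y₁, y₂, 0, by omega, by omega⟩
  · omega

theorem Payable.lowCoins_sub_b (ha : 0 < a) (h : Payable (lowCoins a) L ℓ)
    (hbL : 2 * a - 1 ≤ L) :
    Payable (lowCoins a) (L - (2 * a - 1)) (ℓ - 1) := by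
  obtain ⟨y₁, _ | _ | y₂, _ | y₃, rfl, hk⟩ := payable_lowCoins_iff.1 h <;>
    simp only [add_mul, one_mul, zero_mul, add_zero, zero_add] at hbL ⊢
  · exact payable_lowCoins_iff.2 ⟨y₁ - (2 * a - 1), 0, 0, by omega, by omega⟩
  · exact payable_lowCoins_iff.2 ⟨y₁, 0, y₃, by omega, by omega⟩
  · exact payable_lowCoins_iff.2 ⟨y₁ - (a - 1), 0, 0, by omega, by omega⟩
  · exact payable_lowCoins_iff.2 ⟨y₁, 1, y₃, by omega, by omega⟩
  · exact payable_lowCoins_iff.2 ⟨y₁ + 1, y₂, 0, by omega, by omega⟩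
  · exact payable_lowCoins_iff.2 ⟨y₁, y₂ + 2, y₃, by simp only [add_mul]; omega, by omega⟩

theorem Payable.lowCoins_sub_mul_b (ha : 0 < a) (h : Payable (lowCoins a) L ℓ) {s : ℕ}
    (hs : s * (2 * a - 1) ≤ L) : Payable (lowCoins a) (L - s * (2 * a - 1)) (ℓ - s) := by
  induction s with
  | zero => simpa using h
  | succ s ih =>
    simp only [add_mul, one_mul] at hs ⊢
    exact ((ih (by omega)).lowCoins_sub_b ha (by omega)).of_eq_of_le (by omega) (by omega)

theorem Payable.lowCoins_sub_pred (ha : 0 < a) (h : Payable (lowCoins a) L ℓ) (hL : a - 1 ≤ L) :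
    Payable (lowCoins a) (L - (a - 1)) ℓ := by
  obtain ⟨y₁, _ | y₂, _ | y₃, rfl, hk⟩ := payable_lowCoins_iff.1 h <;>
    simp only [add_mul, one_mul, zero_mul, add_zero] at hL ⊢
  · exact payable_lowCoins_iff.2 ⟨y₁ - (a - 1), 0, 0, by omega, by omega⟩
  · exact payable_lowCoins_iff.2 ⟨y₁, 1, y₃, by omega, by omega⟩
  · exact payable_lowCoins_iff.2 ⟨y₁ + 1, y₂, 0, by omega, by omega⟩
  · exact payable_lowCoins_iff.2 ⟨y₁ + 1, y₂, y₃ + 1, by simp only [add_mul]; omega, by omega⟩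

def c₄ (a m : ℕ) : ℕ := m * (2 * a - 1) - (a - 1)

def c₅ (a m : ℕ) : ℕ := m * (2 * a - 1)

def c₆ (a m : ℕ) : ℕ := (2 * m - 1) * (2 * a - 1)

def coins (a m : ℕ) : List ℕ := lowCoins a ++ [c₄ a m, c₅ a m, c₆ a m]

theorem coins_relations (hm : 2 ≤ m) :
    c₅ a m = m * (2 * a - 1) ∧ c₆ a m = (2 * m - 1) * (2 * a - 1) ∧
      c₄ a m + (a - 1) = c₅ a m ∧ c₆ a m + (2 * a - 1) = 2 * c₅ a m ∧
      (m - 1) * (2 * a - 1) + (2 * a - 1) = c₅ a m ∧ 2 * a - 1 ≤ (m - 1) * (2 * a - 1) := by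
  have hb : 2 * a - 1 ≤ (m - 1) * (2 * a - 1) := Nat.le_mul_of_pos_left _ (by omega)
  have h5 : (m - 1) * (2 * a - 1) + (2 * a - 1) = c₅ a m := by
    rw [c₅, ← add_one_mul, Nat.sub_add_cancel (by omega)]
  have h6 : c₆ a m + (2 * a - 1) = 2 * c₅ a m := by
    rw [c₆, c₅, ← add_one_mul, Nat.sub_add_cancel (by omega), mul_assoc]
  refine ⟨rfl, rfl, ?_, h6, h5, hb⟩
  rw [c₅] at h5 ⊢
  rw [c₄]
  omega

theorem Payable.coins_of_lowCoins {k : ℕ} (h : Payable (lowCoins a) L ℓ) (x₄ x₅ x₆ : ℕ)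
    (hv : L + x₄ * c₄ a m + x₅ * c₅ a m + x₆ * c₆ a m = v) (hk : ℓ + x₄ + x₅ + x₆ ≤ k) :
    Payable (coins a m) v k :=
  payable_append_triple_iff.2 ⟨L, ℓ, x₄, x₅, x₆, h, hv, hk⟩

theorem one_mem_lowCoins : 1 ∈ lowCoins a := by simp [lowCoins]

theorem self_mem_lowCoins : a ∈ lowCoins a := by simp [lowCoins]

theorem two_mul_sub_one_mem_lowCoins : 2 * a - 1 ∈ lowCoins a := by simp [lowCoins]

theorem payable_sub_coinMax_of_c₆_le (ha : 0 < a) (hm : 2 ≤ m) (hL : Payable (lowCoins a) L ℓ)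
    (hv : L + x₄ * c₄ a m + x₅ * c₅ a m + x₆ * c₆ a m = v) (h6 : c₆ a m ≤ v) :
    Payable (coins a m) (v - coinMax (coins a m) v) (ℓ + x₄ + x₅ + x₆ - 1) := by
  have hrel := coins_relations (a := a) hm
  rw [coinMax_eq (by simp [coins]) h6 (by simp [coins, lowCoins]; omega)]
  subst hv
  obtain _ | x₆ := x₆
  swap; · exact hL.coins_of_lowCoins x₄ x₅ x₆ (by simp only [add_mul]; omega) (by omega)
  obtain h4 | h5 | ⟨h4, h5⟩ : 2 ≤ x₄ ∨ 2 ≤ x₅ ∨ (x₄ ≤ 1 ∧ x₅ ≤ 1) := by omega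
  · obtain ⟨x₄, rfl⟩ := Nat.exists_eq_add_of_le' h4
    exact (hL.add_coin one_mem_lowCoins).coins_of_lowCoins x₄ x₅ 0
      (by simp only [add_mul]; omega) (by omega)
  · obtain ⟨x₅, rfl⟩ := Nat.exists_eq_add_of_le' h5
    exact (hL.add_coin two_mul_sub_one_mem_lowCoins).coins_of_lowCoins x₄ x₅ 0
      (by simp only [add_mul]; omega) (by omega)
  interval_cases x₄ <;> interval_cases x₅
  · exact (hL.lowCoins_sub_mul_b ha (s := 2 * m - 1) (by omega)).coins_of_lowCoins 0 0 0
      (by omega) (by omega)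
  · exact (hL.lowCoins_sub_mul_b ha (s := m - 1) (by omega)).coins_of_lowCoins 0 0 0
      (by omega) (by omega)
  · exact ((hL.lowCoins_sub_mul_b ha (s := m - 1) (by omega)).lowCoins_sub_pred ha
      (by omega)).coins_of_lowCoins 0 0 0 (by omega) (by omega)
  · exact (hL.add_coin self_mem_lowCoins).coins_of_lowCoins 0 0 0 (by omega) (by omega)

theorem payable_sub_coinMax_of_c₅_le (ha : 0 < a) (hm : 2 ≤ m) (hL : Payable (lowCoins a) L ℓ)
    (hv : L + x₄ * c₄ a m + x₅ * c₅ a m + x₆ * c₆ a m = v) (h5 : c₅ a m ≤ v) (h6 : v < c₆ a m) :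
    Payable (coins a m) (v - coinMax (coins a m) v) (ℓ + x₄ + x₅ + x₆ - 1) := by
  have hrel := coins_relations (a := a) hm
  rw [coinMax_eq (by simp [coins]) h5 (by simp [coins, lowCoins]; omega)]
  subst hv
  obtain _ | x₆ := x₆
  swap; · simp only [add_mul] at h6; omega
  obtain _ | x₅ := x₅
  swap; · exact hL.coins_of_lowCoins x₄ x₅ 0 (by simp only [add_mul]; omega) (by omega)
  obtain _ | _ | x₄ := x₄
  · exact (hL.lowCoins_sub_mul_b ha (s := m) (by omega)).coins_of_lowCoins 0 0 0
      (by omega) (by omega)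
  · exact (hL.lowCoins_sub_pred ha (by omega)).coins_of_lowCoins 0 0 0 (by omega) (by omega)
  · simp only [add_mul] at h6; omega

theorem payable_sub_coinMax_of_c₄_le (ha : 0 < a) (hm : 2 ≤ m) (hL : Payable (lowCoins a) L ℓ)
    (hv : L + x₄ * c₄ a m + x₅ * c₅ a m + x₆ * c₆ a m = v) (h4 : c₄ a m ≤ v) (h5 : v < c₅ a m) :
    Payable (coins a m) (v - coinMax (coins a m) v) (ℓ + x₄ + x₅ + x₆ - 1) := by
  have hrel := coins_relations (a := a) hm
  rw [coinMax_eq (by simp [coins]) h4 (by simp [coins, lowCoins]; omega)]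
  subst hv
  obtain _ | x₆ := x₆
  swap; · simp only [add_mul] at h5; omega
  obtain _ | x₅ := x₅
  swap; · simp only [add_mul] at h5; omega
  obtain _ | x₄ := x₄
  · exact ((hL.lowCoins_sub_mul_b ha (s := m - 1) (by omega)).lowCoins_sub_a (by omega)
      (by omega)).coins_of_lowCoins 0 0 0 (by omega) (by omega)
  · exact hL.coins_of_lowCoins x₄ 0 0 (by simp only [add_mul]; omega) (by omega)

theorem payable_sub_coinMax_of_lt_c₄ (ha : 0 < a) (hm : 2 ≤ m) (hL : Payable (lowCoins a) L ℓ)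
    (hv : L + x₄ * c₄ a m + x₅ * c₅ a m + x₆ * c₆ a m = v) (hv0 : 0 < v) (h4 : v < c₄ a m) :
    Payable (coins a m) (v - coinMax (coins a m) v) (ℓ + x₄ + x₅ + x₆ - 1) := by
  have hrel := coins_relations (a := a) hm
  obtain rfl : x₄ = 0 := by
    by_contra h; have := Nat.le_mul_of_pos_left (c₄ a m) (Nat.pos_of_ne_zero h); omega
  obtain rfl : x₅ = 0 := by
    by_contra h; have := Nat.le_mul_of_pos_left (c₅ a m) (Nat.pos_of_ne_zero h); omega
  obtain rfl : x₆ = 0 := by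
    by_contra h; have := Nat.le_mul_of_pos_left (c₆ a m) (Nat.pos_of_ne_zero h); omega
  simp only [zero_mul, add_zero] at hv
  subst hv
  by_cases hb : 2 * a - 1 ≤ L
  · rw [coinMax_eq (by simp [coins, lowCoins]) hb (by simp [coins, lowCoins]; omega)]
    exact (hL.lowCoins_sub_b ha hb).coins_of_lowCoins 0 0 0 (by omega) (by omega)
  by_cases ha' : a ≤ L
  · rw [coinMax_eq (by simp [coins, lowCoins]) ha' (by simp [coins, lowCoins]; omega)]
    exact (hL.lowCoins_sub_a ha' (by omega)).coins_of_lowCoins 0 0 0 (by omega) (by omega)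
  · rw [coinMax_eq (by simp [coins, lowCoins]) hv0 (by simp [coins, lowCoins]; omega)]
    exact (hL.lowCoins_sub_one hv0 (by omega)).coins_of_lowCoins 0 0 0 (by omega) (by omega)

theorem greedyExchange_coins (ha : 0 < a) (hm : 2 ≤ m) : GreedyExchange (coins a m) := by
  intro v k hv0 hk
  obtain ⟨L, ℓ, x₄, x₅, x₆, hL, hv, hℓk⟩ := payable_append_triple_iff.1 (payable_of_mem hk)
  refine Payable.of_eq_of_le ?_ rfl (Nat.sub_le_sub_right hℓk 1)
  by_cases h6 : c₆ a m ≤ v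
  · exact payable_sub_coinMax_of_c₆_le ha hm hL hv h6
  by_cases h5 : c₅ a m ≤ v
  · exact payable_sub_coinMax_of_c₅_le ha hm hL hv h5 (by omega)
  by_cases h4 : c₄ a m ≤ v
  · exact payable_sub_coinMax_of_c₄_le ha hm hL hv h4 (by omega)
  · exact payable_sub_coinMax_of_lt_c₄ ha hm hL hv hv0 (by omega)

end Family

theorem stmt_16_general (a m : ℕ) (ha : 3 ≤ a) (hm1 : 1 < m) :
    Orderly [1, a, 2 * a - 1, m * (2 * a - 1) - (a - 1), m * (2 * a - 1),
      (2 * m - 1) * (2 * a - 1)] :=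
  (greedyExchange_coins (by omega) hm1).orderly (by simp)

theorem stmt_16 (a m : ℕ) (ha : 3 ≤ a) (hm1 : 1 < m) (hma : m < a) :
    Orderly [1, a, 2 * a - 1, m * (2 * a - 1) - (a - 1), m * (2 * a - 1),
      (2 * m - 1) * (2 * a - 1)] :=
  stmt_16_general a m ha hm1
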